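/- Let A be an m×n real matrix possessing a nonsingular r×r submatrix A₁₁, and let ε > 0. If ‖A₁₁⁻¹‖_C ≤ 1/(max(m,n)·ε), then σ_r(A) ≥ ε. -/

import Mathlib

/-! On vectors `x` supported on the columns `ci`, the rows `ri` of `A x` are `A₁₁ x'`, where `x'` is
the restriction of `x`. Every entry of `A₁₁⁻¹` is at most `‖A₁₁⁻¹‖_C`, so by Cauchy–Schwarz
`‖x‖ = ‖x'‖ ≤ r ‖A₁₁⁻¹‖_C ‖A₁₁ x'‖ ≤ ‖A x‖ / ε`. Thus `‖A x‖ ≥ ε ‖x‖` on an `r`-dimensional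
subspace, and the min–max principle for the eigenvalues of `Aᵀ A` gives `σ_r(A) ≥ ε`: if fewer
than `r` eigenvalues were `≥ ε²`, that subspace would contain a nonzero vector orthogonal to all
their eigenvectors, on which the quadratic form of `Aᵀ A` is `< ε² ‖x‖²`. -/

open Matrix

/-- The maximum absolute entry norm `‖·‖_C` of a matrix. -/
noncomputable def cnorm {m n : Type*} [Fintype m] [Fintype n]
    (M : Matrix m n ℝ) : ℝ := ⨆ i, ⨆ j, |M i j|

/-- The `k`-th largest value (1-indexed) of a finite family of reals. -/
noncomputable def kthLargest {ι : Type*} [Fintype ι] (f : ι → ℝ) (k : ℕ) : ℝ :=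
  ((Finset.univ.val.map f).sort (· ≤ ·)).getD (Fintype.card ι - k) 0

/-- The `k`-th largest singular value (1-indexed) of a real matrix,
i.e. the square root of the `k`-th largest eigenvalue of `Aᴴ * A`. -/
noncomputable def singularValue {m n : Type*} [Fintype m] [Fintype n] [DecidableEq n]
    (A : Matrix m n ℝ) (k : ℕ) : ℝ :=
  Real.sqrt (kthLargest (show (Aᵀ * A).IsHermitian by
    simpa [Matrix.conjTranspose_eq_transpose_of_trivial] using
      Matrix.isHermitian_conjTranspose_mul_self A).eigenvalues k)

open Module Finset
open scoped RealInnerProductSpace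

theorem List.Pairwise.le_getElem_of_le_countP {α : Type*} [LinearOrder α] {L : List α}
    (hL : L.Pairwise (· ≤ ·)) {c : α} {k : ℕ} (hk0 : 0 < k) (hk : k ≤ L.countP (c ≤ ·)) :
    c ≤ L[L.length - k]'(by have := L.countP_le_length (p := (c ≤ ·)); omega) := by
  have hkL : k ≤ L.length := hk.trans L.countP_le_length
  set i := L.length - k
  by_contra! hlt
  have htake : (L.take (i + 1)).countP (c ≤ ·) = 0 := by
    refine List.countP_eq_zero.mpr fun x hx => ?_
    obtain ⟨j, hj, rfl⟩ := List.getElem_of_mem hx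
    rw [List.length_take] at hj
    have hji : L[j] ≤ L[i] :=
      hL.rel_get_of_le (a := ⟨j, by omega⟩) (b := ⟨i, by omega⟩) (Fin.mk_le_mk.mpr (by omega))
    simpa using hji.trans_lt hlt
  have hdrop := (L.drop (i + 1)).countP_le_length (p := (c ≤ ·))
  have hsplit := List.countP_append (p := (c ≤ ·)) (l₁ := L.take (i + 1)) (l₂ := L.drop (i + 1))
  rw [List.take_append_drop] at hsplit
  rw [List.length_drop] at hdrop
  omega

theorem le_kthLargest {ι : Type*} [Fintype ι] {f : ι → ℝ} {k : ℕ} {c : ℝ} (hk0 : 0 < k)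
    (hk : k ≤ #{i | c ≤ f i}) : c ≤ kthLargest f k := by
  classical
  set L := (univ.val.map f).sort (· ≤ ·)
  have hcount : L.countP (c ≤ ·) = #{i | c ≤ f i} := by
    rw [← Multiset.coe_countP, Multiset.sort_eq, Multiset.countP_map]
    rfl
  have hlen : L.length = Fintype.card ι := by simp [L]
  have hkL : k ≤ L.length := hcount ▸ hk |>.trans L.countP_le_length
  have hle := (Multiset.pairwise_sort _ (· ≤ ·)).le_getElem_of_le_countP hk0 (hcount ▸ hk)
  change c ≤ L.getD (Fintype.card ι - k) 0
  rw [List.getD_eq_getElem _ _ (by omega)]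
  simpa [hlen] using hle

namespace Matrix.IsHermitian

variable {ι : Type*} [Fintype ι] [DecidableEq ι] {M : Matrix ι ι ℝ} (hM : M.IsHermitian)

theorem inner_toEuclideanLin_self (x : EuclideanSpace ℝ ι) :
    ⟪x, toEuclideanLin M x⟫ = ∑ i, hM.eigenvalues i * ⟪hM.eigenvectorBasis i, x⟫ ^ 2 := by
  set b := hM.eigenvectorBasis
  have hMb : ∀ i, toEuclideanLin M (b i) = hM.eigenvalues i • b i := fun i =>
    congrArg (WithLp.toLp 2) (hM.mulVec_eigenvectorBasis i)
  have hMx : toEuclideanLin M x = ∑ i, (hM.eigenvalues i * ⟪b i, x⟫) • b i := by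
    conv_lhs => rw [← b.sum_repr' x]
    simp only [map_sum, map_smul, hMb, smul_smul, mul_comm]
  simp only [hMx, inner_sum, real_inner_smul_right]
  refine sum_congr rfl fun i _ => ?_
  rw [real_inner_comm x]
  ring

theorem inner_toEuclideanLin_self_lt {c : ℝ} {x : EuclideanSpace ℝ ι} (hx : x ≠ 0)
    (hxc : ∀ i, c ≤ hM.eigenvalues i → ⟪hM.eigenvectorBasis i, x⟫ = 0) :
    ⟪x, toEuclideanLin M x⟫ < c * ‖x‖ ^ 2 := by
  set b := hM.eigenvectorBasis
  obtain ⟨i₀, hi₀⟩ : ∃ i, ⟪b i, x⟫ ≠ 0 := by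
    by_contra! h
    exact hx (b.repr.injective (by ext i; simp [b.repr_apply_apply, h]))
  rw [hM.inner_toEuclideanLin_self, ← b.sum_sq_inner_right, mul_sum]
  refine sum_lt_sum (fun i _ => ?_) ⟨i₀, mem_univ _, ?_⟩
  · rcases lt_or_ge (hM.eigenvalues i) c with hi | hi
    · exact mul_le_mul_of_nonneg_right hi.le (sq_nonneg _)
    · simp [b, hxc i hi]
  · have hi₀c : hM.eigenvalues i₀ < c := not_le.mp fun h => hi₀ (hxc i₀ h)
    exact mul_lt_mul_of_pos_right hi₀c (by positivity)

theorem finrank_le_card_filter_le_eigenvalues (V : Submodule ℝ (EuclideanSpace ℝ ι)) {c : ℝ}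
    (hV : ∀ x ∈ V, c * ‖x‖ ^ 2 ≤ ⟪x, toEuclideanLin M x⟫) :
    finrank ℝ V ≤ #{i | c ≤ hM.eigenvalues i} := by
  by_contra! hlt
  let coeffs : V →ₗ[ℝ] {i // c ≤ hM.eigenvalues i} → ℝ :=
    LinearMap.pi fun i => innerₛₗ ℝ (hM.eigenvectorBasis i) ∘ₗ V.subtype
  have hker : LinearMap.ker coeffs ≠ ⊥ := LinearMap.ker_ne_bot_of_finrank_lt <| by
    rwa [Module.finrank_fintype_fun_eq_card, Fintype.card_subtype]
  obtain ⟨⟨x, hxV⟩, hx, hx0⟩ := Submodule.exists_mem_ne_zero_of_ne_bot hker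
  have hxc : ∀ i, c ≤ hM.eigenvalues i → ⟪hM.eigenvectorBasis i, x⟫ = 0 := fun i hi =>
    congrFun (LinearMap.mem_ker.mp hx) ⟨i, hi⟩
  exact (hM.inner_toEuclideanLin_self_lt (by simpa using hx0) hxc).not_ge (hV x hxV)

end Matrix.IsHermitian

theorem Matrix.inner_toEuclideanLin_transpose_mul_self {m n : Type*} [Fintype m] [Fintype n]
    [DecidableEq n] (A : Matrix m n ℝ) (x : EuclideanSpace ℝ n) :
    ⟪x, toEuclideanLin (Aᵀ * A) x⟫ = ‖toEuclideanLin A x‖ ^ 2 := by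
  classical
  rw [toLpLin_mul_same, ← conjTranspose_eq_transpose_of_trivial,
    toEuclideanLin_conjTranspose_eq_adjoint, LinearMap.comp_apply, LinearMap.adjoint_inner_right,
    real_inner_self_eq_norm_sq]

theorem le_singularValue_of_le_finrank {m n : Type*} [Fintype m] [Fintype n] [DecidableEq n]
    (A : Matrix m n ℝ) {k : ℕ} (hk : 0 < k) {V : Submodule ℝ (EuclideanSpace ℝ n)}
    (hV : k ≤ finrank ℝ V) {ε : ℝ} (hε : 0 ≤ ε)
    (hA : ∀ x ∈ V, ε * ‖x‖ ≤ ‖toEuclideanLin A x‖) : ε ≤ singularValue A k := by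
  have hH : (Aᵀ * A).IsHermitian := by
    simpa [conjTranspose_eq_transpose_of_trivial] using isHermitian_conjTranspose_mul_self A
  have hq : ∀ x ∈ V, ε ^ 2 * ‖x‖ ^ 2 ≤ ⟪x, toEuclideanLin (Aᵀ * A) x⟫ := fun x hx => by
    rw [A.inner_toEuclideanLin_transpose_mul_self, ← mul_pow]
    exact pow_le_pow_left₀ (by positivity) (hA x hx) 2
  rw [singularValue, ← Real.sqrt_sq hε]
  exact Real.sqrt_le_sqrt <|
    le_kthLargest hk (hV.trans (hH.finrank_le_card_filter_le_eigenvalues V hq))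

section cnorm

variable {m n : Type*} [Fintype m] [Fintype n]

theorem abs_le_cnorm (M : Matrix m n ℝ) (i : m) (j : n) : |M i j| ≤ cnorm M :=
  (le_ciSup (Set.finite_range fun j => |M i j|).bddAbove j).trans
    (le_ciSup (Set.finite_range fun i => ⨆ j, |M i j|).bddAbove i)

theorem cnorm_nonneg (M : Matrix m n ℝ) : 0 ≤ cnorm M :=
  Real.iSup_nonneg fun _ => Real.iSup_nonneg fun _ => abs_nonneg _

theorem sum_sq_mulVec_le (C : Matrix m n ℝ) (z : n → ℝ) :
    ∑ i, (C *ᵥ z) i ^ 2 ≤ Fintype.card m * Fintype.card n * cnorm C ^ 2 * ∑ j, z j ^ 2 := by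
  have hrow : ∀ i, ∑ j, C i j ^ 2 ≤ Fintype.card n * cnorm C ^ 2 := fun i => by
    calc ∑ j, C i j ^ 2 ≤ ∑ _j : n, cnorm C ^ 2 := sum_le_sum fun j _ => by
          rw [← sq_abs]; exact pow_le_pow_left₀ (abs_nonneg _) (abs_le_cnorm C i j) 2
      _ = Fintype.card n * cnorm C ^ 2 := by rw [sum_const, card_univ, nsmul_eq_mul]
  calc ∑ i, (C *ᵥ z) i ^ 2 ≤ ∑ _i : m, Fintype.card n * cnorm C ^ 2 * ∑ j, z j ^ 2 :=
        sum_le_sum fun i _ => (sum_mul_sq_le_sq_mul_sq univ (C i) z).trans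
          (mul_le_mul_of_nonneg_right (hrow i) (sum_nonneg fun j _ => sq_nonneg _))
    _ = Fintype.card m * Fintype.card n * cnorm C ^ 2 * ∑ j, z j ^ 2 := by
        rw [sum_const, card_univ, nsmul_eq_mul]; ring

theorem sum_sq_le_of_isUnit_det {ι : Type*} [Fintype ι] [DecidableEq ι] {B : Matrix ι ι ℝ}
    (hB : IsUnit B.det) (v : ι → ℝ) :
    ∑ l, v l ^ 2 ≤ (Fintype.card ι * cnorm B⁻¹) ^ 2 * ∑ k, (B *ᵥ v) k ^ 2 := by
  have h := sum_sq_mulVec_le B⁻¹ (B *ᵥ v)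
  rw [mulVec_mulVec, nonsing_inv_mul B hB, one_mulVec] at h
  linarith

end cnorm

theorem sum_sq_submatrix_mulVec_le {m n ι κ : Type*} [Fintype m] [Fintype n] [Fintype ι]
    [Fintype κ] (A : Matrix m n ℝ) {ri : ι → m} {ci : κ → n} (hri : Function.Injective ri)
    (hci : Function.Injective ci) {x : n → ℝ} (hx : ∀ j ∉ Set.range ci, x j = 0) :
    ∑ k, (A.submatrix ri ci *ᵥ (x ∘ ci)) k ^ 2 ≤ ∑ i, (A *ᵥ x) i ^ 2 := by
  have hrow : ∀ k, (A.submatrix ri ci *ᵥ (x ∘ ci)) k = (A *ᵥ x) (ri k) := fun k =>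
    Fintype.sum_of_injective ci hci _ _ (fun j hj => by simp [hx j hj]) fun _ => rfl
  calc ∑ k, (A.submatrix ri ci *ᵥ (x ∘ ci)) k ^ 2
      = ∑ i ∈ univ.map ⟨ri, hri⟩, (A *ᵥ x) i ^ 2 := by simp only [hrow, sum_map]; rfl
    _ ≤ ∑ i, (A *ᵥ x) i ^ 2 := sum_le_univ_sum_of_nonneg fun _ => sq_nonneg _

theorem norm_le_card_mul_cnorm_inv_mul_norm_toEuclideanLin {m n ι : Type*} [Fintype m]
    [Fintype n] [DecidableEq n] [Fintype ι] [DecidableEq ι] (A : Matrix m n ℝ) {ri : ι → m}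
    {ci : ι → n} (hri : Function.Injective ri) (hci : Function.Injective ci)
    (hA : IsUnit (A.submatrix ri ci).det) {x : EuclideanSpace ℝ n}
    (hx : ∀ j ∉ Set.range ci, x j = 0) :
    ‖x‖ ≤ Fintype.card ι * cnorm (A.submatrix ri ci)⁻¹ * ‖toEuclideanLin A x‖ := by
  have hnorm : ‖x‖ ^ 2 = ∑ l, x (ci l) ^ 2 := by
    rw [EuclideanSpace.norm_sq_eq]
    exact (Fintype.sum_of_injective ci hci _ _ (fun j hj => by simp [hx j hj]) fun l => by
      simp [sq_abs]).symm
  have hAx : ‖toEuclideanLin A x‖ ^ 2 = ∑ i, (A *ᵥ x) i ^ 2 := by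
    simp [EuclideanSpace.norm_sq_eq, toLpLin_apply, sq_abs]
  refine le_of_pow_le_pow_left₀ two_ne_zero
    (mul_nonneg (mul_nonneg (Nat.cast_nonneg _) (cnorm_nonneg _)) (norm_nonneg _)) ?_
  rw [hnorm, mul_pow, hAx]
  exact (sum_sq_le_of_isUnit_det hA _).trans
    (mul_le_mul_of_nonneg_left (sum_sq_submatrix_mulVec_le A hri hci hx) (sq_nonneg _))

namespace EuclideanSpace

variable {n ι : Type*} [Fintype n] [Fintype ι] {ci : ι → n}

theorem finrank_span_range_basisFun_comp (hci : Function.Injective ci) :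
    finrank ℝ (Submodule.span ℝ (Set.range (basisFun n ℝ ∘ ci))) = Fintype.card ι :=
  finrank_span_eq_card ((basisFun n ℝ).orthonormal.comp ci hci).linearIndependent

theorem apply_eq_zero_of_mem_span_range_basisFun_comp {x : EuclideanSpace ℝ n}
    (hx : x ∈ Submodule.span ℝ (Set.range (basisFun n ℝ ∘ ci))) {j : n} (hj : j ∉ Set.range ci) :
    x j = 0 := by
  obtain ⟨a, rfl⟩ := (Submodule.mem_span_range_iff_exists_fun ℝ).mp hx
  have hj' : ∀ l, ci l ≠ j := fun l h => hj ⟨l, h⟩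
  classical
  simp [basisFun_apply, hj']

end EuclideanSpace

/-- Let `A` be an `m × n` real matrix possessing a nonsingular `r × r` submatrix `A₁₁`, and
let `ε > 0`.  If `‖A₁₁⁻¹‖_C ≤ 1 / (max(m,n) ε)`, then `σ_r(A) ≥ ε`. -/
theorem sigma_r_ge_of_cnorm_inv_le {m n r : ℕ} (hr0 : 0 < r)
    (A : Matrix (Fin m) (Fin n) ℝ)
    (ri : Fin r → Fin m) (ci : Fin r → Fin n)
    (hri : Function.Injective ri) (hci : Function.Injective ci)
    (hA : IsUnit (A.submatrix ri ci).det) (ε : ℝ) (hε : 0 < ε)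
    (h : cnorm (A.submatrix ri ci)⁻¹ ≤ 1 / ((max m n : ℕ) * ε)) :
    singularValue A r ≥ ε := by
  set c := cnorm (A.submatrix ri ci)⁻¹
  have hrn : r ≤ n := by simpa using Fintype.card_le_of_injective ci hci
  have hrN : (r : ℝ) ≤ (max m n : ℕ) := by exact_mod_cast hrn.trans (le_max_right m n)
  have hεrc : ε * (r * c) ≤ 1 := by
    have hN : (0 : ℝ) < (max m n : ℕ) := (Nat.cast_pos.mpr hr0).trans_le hrN
    have hc : 0 ≤ c := cnorm_nonneg _
    calc ε * (r * c) ≤ ε * ((max m n : ℕ) * (1 / ((max m n : ℕ) * ε))) := by gcongr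
      _ = 1 := by field_simp
  have hV := EuclideanSpace.finrank_span_range_basisFun_comp hci
  rw [Fintype.card_fin] at hV
  refine le_singularValue_of_le_finrank A hr0 hV.ge hε.le fun x hx => ?_
  have hxA := norm_le_card_mul_cnorm_inv_mul_norm_toEuclideanLin A hri hci hA
    fun j hj => EuclideanSpace.apply_eq_zero_of_mem_span_range_basisFun_comp hx hj
  rw [Fintype.card_fin] at hxA
  calc ε * ‖x‖ ≤ ε * (r * c * ‖toEuclideanLin A x‖) := by gcongr
    _ ≤ ‖toEuclideanLin A x‖ := by
      rw [← mul_assoc]; exact mul_le_of_le_one_left (norm_nonneg _) hεrc
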